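/- Let N be a natural number and f(t) = Σ_{n=−N}^{N} a(n) e^{int} with a(n) ∈ ℂ (f may be complex-valued). Define y₁(t) = 1 + (1/2) Σ_{n=−N}^{−1} ( e^{i(n+N+1)t} + e^{int} ) and y₂(t) = e^{i(N+1)t} − i + Σ_{n=−N}^{−1} ( −(i/2) e^{int} + (i/2) e^{i(n+N+1)t} ). Then for all t ∈ ℝ, f(t) = (1/(N+1)) Σ_{p=0}^{N} [ f(t_p) y₁(t − t_p) + Hf(t_p) y₂(t − t_p) ], where t_p = 2πp/(N+1). -/

import Mathlib

/-!
Write `e_k(s) = exp(iks)` and `t_p = 2πp/(N+1)`. Orthogonality of the `(N+1)`-th roots of unity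
gives `∑_p e_n(t_p) e_m(t - t_p) = (N+1) e_m(t)` if `N+1 ∣ n - m`, and `0` otherwise. By
linearity it suffices to treat `f = e_n` with `|n| ≤ N`, whose kernel `y₁ - i sgn(n) y₂` is
`y₁` for `n = 0`, `-i e_{N+1} + ∑_{k=1}^N e_k` for `n > 0`, and `2 + i e_{N+1} + ∑_{k=-N}^{-1} e_k`
for `n < 0`. In each case `e_n` is the only mode of the kernel congruent to `n` modulo `N+1`, and it
has coefficient `1`.
-/

open Real Finset

noncomputable def expMode (k : ℤ) (s : ℝ) : ℂ := Complex.exp (Complex.I * k * s)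

noncomputable def samplePoint (M p : ℕ) : ℝ := 2 * π * p / M

lemma expMode_zero (s : ℝ) : expMode 0 s = 1 := by
  simp [expMode]

lemma expMode_mul_expMode_sub (n m : ℤ) (u t : ℝ) :
    expMode n u * expMode m (t - u) = expMode m t * expMode (n - m) u := by
  simp only [expMode, ← Complex.exp_add]
  congr 1
  push_cast
  ring

lemma sum_expMode_samplePoint {M : ℕ} (hM : M ≠ 0) (k : ℤ) :
    ∑ p ∈ range M, expMode k (samplePoint M p) = if (M : ℤ) ∣ k then (M : ℂ) else 0 := by
  set ζ := Complex.exp (2 * π * Complex.I / M)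
  have hζ : IsPrimitiveRoot ζ M := Complex.isPrimitiveRoot_exp M hM
  have hterm : ∀ p ∈ range M, expMode k (samplePoint M p) = (ζ ^ k) ^ p := by
    intro p _
    rw [← Complex.exp_int_mul, ← Complex.exp_nat_mul, expMode, samplePoint]
    congr 1
    push_cast
    ring
  rw [sum_congr rfl hterm]
  split_ifs with hk
  · simp [(hζ.zpow_eq_one_iff_dvd k).mpr hk]
  · have hζk : (ζ ^ k) ^ M = 1 := by
      rw [← zpow_natCast, ← zpow_mul, mul_comm, zpow_mul, zpow_natCast, hζ.pow_eq_one, one_zpow]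
    rw [geom_sum_eq (mt (hζ.zpow_eq_one_iff_dvd k).mp hk), hζk, sub_self, zero_div]

noncomputable def sampledConv (M : ℕ) (g : ℝ → ℂ) : (ℝ → ℂ) →ₗ[ℂ] ℝ → ℂ where
  toFun y t := ∑ p ∈ range M, g (samplePoint M p) * y (t - samplePoint M p)
  map_add' y z := by
    ext t
    simp only [Pi.add_apply, mul_add, sum_add_distrib]
  map_smul' c y := by
    ext t
    simp only [Pi.smul_apply, smul_eq_mul, RingHom.id_apply, mul_sum]
    exact sum_congr rfl fun _ _ => mul_left_comm _ _ _

lemma sampledConv_apply (M : ℕ) (g y : ℝ → ℂ) (t : ℝ) :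
    sampledConv M g y t = ∑ p ∈ range M, g (samplePoint M p) * y (t - samplePoint M p) := rfl

lemma sampledConv_expMode {M : ℕ} (hM : M ≠ 0) (n m : ℤ) :
    sampledConv M (expMode n) (expMode m) =
      if (M : ℤ) ∣ n - m then (M : ℂ) • expMode m else 0 := by
  ext t
  simp only [sampledConv_apply, expMode_mul_expMode_sub, ← mul_sum,
    sum_expMode_samplePoint hM]
  split_ifs <;> simp [mul_comm]

lemma sampledConv_sum_expMode {M : ℕ} (hM : M ≠ 0) {n : ℤ} {S : Finset ℤ}
    (hS : ∀ m ∈ S, |n - m| < M) :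
    sampledConv M (expMode n) (∑ m ∈ S, expMode m) =
      if n ∈ S then (M : ℂ) • expMode n else 0 := by
  rw [map_sum, ← sum_ite_eq S n fun m => (M : ℂ) • expMode m]
  refine sum_congr rfl fun m hm => ?_
  rw [sampledConv_expMode hM]
  refine if_congr ⟨fun h => ?_, fun h => by rw [h, sub_self]; exact dvd_zero _⟩ rfl rfl
  exact sub_eq_zero.mp (Int.eq_zero_of_abs_lt_dvd h (hS m hm))

noncomputable def kernel₁ (N : ℕ) (s : ℝ) : ℂ :=
  1 + (1 / 2) * ∑ m ∈ Icc (-(N : ℤ)) (-1), (expMode (m + N + 1) s + expMode m s)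

noncomputable def kernel₂ (N : ℕ) (s : ℝ) : ℂ :=
  expMode (N + 1) s - Complex.I + ∑ m ∈ Icc (-(N : ℤ)) (-1),
    (-(Complex.I / 2) * expMode m s + (Complex.I / 2) * expMode (m + N + 1) s)

lemma sum_expMode_shift (N : ℕ) (s : ℝ) :
    ∑ m ∈ Icc (-(N : ℤ)) (-1), expMode (m + N + 1) s = ∑ k ∈ Icc 1 (N : ℤ), expMode k s := by
  have h := sum_map (Icc (-(N : ℤ)) (-1)) (addRightEmbedding ((N : ℤ) + 1)) (expMode · s)
  rw [map_add_right_Icc] at h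
  simpa [add_assoc] using h.symm

lemma kernel₁_eq (N : ℕ) :
    kernel₁ N = expMode 0 + (1 / 2 : ℂ) •
      (∑ k ∈ Icc 1 (N : ℤ), expMode k + ∑ m ∈ Icc (-(N : ℤ)) (-1), expMode m) := by
  ext s
  simp only [kernel₁, Pi.add_apply, Pi.smul_apply, smul_eq_mul, Finset.sum_apply, expMode_zero,
    sum_add_distrib, sum_expMode_shift]

lemma kernel₁_sub_I_smul_kernel₂ (N : ℕ) :
    kernel₁ N + (-Complex.I) • kernel₂ N =
      (-Complex.I) • expMode (N + 1) + ∑ k ∈ Icc 1 (N : ℤ), expMode k := by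
  ext s
  simp only [kernel₁, kernel₂, Pi.add_apply, Pi.smul_apply, smul_eq_mul, Finset.sum_apply,
    ← sum_expMode_shift]
  have hsum : (1 / 2) * ∑ m ∈ Icc (-(N : ℤ)) (-1), (expMode (m + N + 1) s + expMode m s) +
      (-Complex.I) * ∑ m ∈ Icc (-(N : ℤ)) (-1),
        (-(Complex.I / 2) * expMode m s + (Complex.I / 2) * expMode (m + N + 1) s) =
      ∑ m ∈ Icc (-(N : ℤ)) (-1), expMode (m + N + 1) s := by
    rw [mul_sum, mul_sum, ← sum_add_distrib]
    refine sum_congr rfl fun m _ => ?_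
    linear_combination (expMode m s - expMode (m + N + 1) s) / 2 * Complex.I_sq
  linear_combination hsum + Complex.I_sq

lemma kernel₁_add_I_smul_kernel₂ (N : ℕ) :
    kernel₁ N + Complex.I • kernel₂ N =
      (2 : ℂ) • expMode 0 + Complex.I • expMode (N + 1) + ∑ m ∈ Icc (-(N : ℤ)) (-1), expMode m := by
  ext s
  simp only [kernel₁, kernel₂, Pi.add_apply, Pi.smul_apply, smul_eq_mul, Finset.sum_apply,
    expMode_zero]
  have hsum : (1 / 2) * ∑ m ∈ Icc (-(N : ℤ)) (-1), (expMode (m + N + 1) s + expMode m s) +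
      Complex.I * ∑ m ∈ Icc (-(N : ℤ)) (-1),
        (-(Complex.I / 2) * expMode m s + (Complex.I / 2) * expMode (m + N + 1) s) =
      ∑ m ∈ Icc (-(N : ℤ)) (-1), expMode m s := by
    rw [mul_sum, mul_sum, ← sum_add_distrib]
    refine sum_congr rfl fun m _ => ?_
    linear_combination (expMode (m + N + 1) s - expMode m s) / 2 * Complex.I_sq
  linear_combination hsum - Complex.I_sq

lemma sampledConv_kernel {N : ℕ} {n : ℤ} (hn : n ∈ Icc (-(N : ℤ)) N) :
    sampledConv (N + 1) (expMode n) (kernel₁ N + (-Complex.I * Int.sign n) • kernel₂ N) =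
      ((N + 1 : ℕ) : ℂ) • expMode n := by
  rw [mem_Icc] at hn
  have hM : N + 1 ≠ 0 := N.succ_ne_zero
  have hcast : ((N + 1 : ℕ) : ℤ) = (N : ℤ) + 1 := by push_cast; rfl
  have hnot_dvd : n ≠ 0 → ¬ ((N + 1 : ℕ) : ℤ) ∣ n := fun h0 hd =>
    h0 (Int.eq_zero_of_abs_lt_dvd hd (abs_lt.mpr ⟨by omega, by omega⟩))
  have hnot_dvd_sub : n ≠ 0 → ¬ ((N + 1 : ℕ) : ℤ) ∣ n - ((N : ℤ) + 1) := by
    rw [← hcast, dvd_sub_self_right]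
    exact hnot_dvd
  have hclose : ∀ S : Finset ℤ, (∀ m ∈ S, -(N : ℤ) ≤ n - m ∧ n - m ≤ N) →
      ∀ m ∈ S, |n - m| < ((N + 1 : ℕ) : ℤ) := fun S hS m hm => by
    rw [hcast, abs_lt]
    constructor <;> linarith [hS m hm]
  rcases lt_trichotomy n 0 with hneg | rfl | hpos
  · rw [Int.sign_eq_neg_one_of_neg hneg, Int.cast_neg, Int.cast_one, mul_neg_one, neg_neg,
      kernel₁_add_I_smul_kernel₂, map_add, map_add, map_smul, map_smul, sampledConv_expMode hM,
      sampledConv_expMode hM, sampledConv_sum_expMode hM, sub_zero, if_neg (hnot_dvd hneg.ne),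
      if_neg (hnot_dvd_sub hneg.ne), if_pos (mem_Icc.mpr ⟨hn.1, by omega⟩)]
    · simp
    · exact hclose _ fun m hm => by rw [mem_Icc] at hm; omega
  · rw [Int.sign_zero, Int.cast_zero, mul_zero, zero_smul, add_zero, kernel₁_eq, map_add,
      map_smul, map_add, sampledConv_expMode hM, sampledConv_sum_expMode hM,
      sampledConv_sum_expMode hM, sub_self, if_pos (dvd_zero _), if_neg (by simp), if_neg (by simp)]
    · simp
    all_goals exact hclose _ fun m hm => by rw [mem_Icc] at hm; omega
  · rw [Int.sign_eq_one_of_pos hpos, Int.cast_one, mul_one,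
      kernel₁_sub_I_smul_kernel₂, map_add, map_smul, sampledConv_expMode hM,
      sampledConv_sum_expMode hM, if_neg (hnot_dvd_sub hpos.ne'),
      if_pos (mem_Icc.mpr ⟨by omega, hn.2⟩)]
    · simp
    · exact hclose _ fun m hm => by rw [mem_Icc] at hm; omega

lemma sum_samples_eq_sum_sampledConv (M : ℕ) (S : Finset ℤ) (a b : ℤ → ℂ) {f Hf : ℝ → ℂ}
    (hf : ∀ s, f s = ∑ n ∈ S, a n * expMode n s)
    (hHf : ∀ s, Hf s = ∑ n ∈ S, b n * a n * expMode n s) (y₁ y₂ : ℝ → ℂ) (t : ℝ) :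
    ∑ p ∈ range M, (f (samplePoint M p) * y₁ (t - samplePoint M p) +
      Hf (samplePoint M p) * y₂ (t - samplePoint M p)) =
      ∑ n ∈ S, a n * sampledConv M (expMode n) (y₁ + b n • y₂) t := by
  simp only [hf, hHf, sampledConv_apply, Pi.add_apply, Pi.smul_apply, smul_eq_mul, sum_mul,
    ← sum_add_distrib, mul_sum]
  rw [sum_comm]
  exact sum_congr rfl fun n _ => sum_congr rfl fun p _ => by ring

/-- Example 3.5, formula (21): a (possibly complex-valued) trigonometric polynomial
reconstructed from the samples of itself and of its circular Hilbert transform. -/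
theorem complex_signal_from_self_and_hilbert_samples
    (N : ℕ) (a : ℤ → ℂ)
    (f Hf : ℝ → ℂ)
    (hf : ∀ t : ℝ, f t = ∑ n ∈ Finset.Icc (-(N : ℤ)) (N : ℤ),
      a n * Complex.exp (Complex.I * (n : ℂ) * (t : ℂ)))
    (hHf : ∀ t : ℝ, Hf t = ∑ n ∈ Finset.Icc (-(N : ℤ)) (N : ℤ),
      (-Complex.I * ((Int.sign n : ℤ) : ℂ)) * a n * Complex.exp (Complex.I * (n : ℂ) * (t : ℂ)))
    (y₁ y₂ : ℝ → ℂ)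
    (hy₁ : ∀ t : ℝ, y₁ t = 1 + (1 / 2) * ∑ n ∈ Finset.Icc (-(N : ℤ)) (-1 : ℤ),
      (Complex.exp (Complex.I * ((n : ℂ) + (N : ℂ) + 1) * (t : ℂ)) +
       Complex.exp (Complex.I * (n : ℂ) * (t : ℂ))))
    (hy₂ : ∀ t : ℝ, y₂ t = Complex.exp (Complex.I * ((N : ℂ) + 1) * (t : ℂ)) - Complex.I +
      ∑ n ∈ Finset.Icc (-(N : ℤ)) (-1 : ℤ),
        (-(Complex.I / 2) * Complex.exp (Complex.I * (n : ℂ) * (t : ℂ)) +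
         (Complex.I / 2) * Complex.exp (Complex.I * ((n : ℂ) + (N : ℂ) + 1) * (t : ℂ)))) :
    ∀ t : ℝ, f t = (1 / ((N : ℂ) + 1)) * ∑ p ∈ Finset.range (N + 1),
      (f (2 * π * p / (N + 1)) * y₁ (t - 2 * π * p / (N + 1)) +
       Hf (2 * π * p / (N + 1)) * y₂ (t - 2 * π * p / (N + 1))) := by
  intro t
  have hy₁' : y₁ = kernel₁ N := funext fun s => by simp [hy₁, kernel₁, expMode]
  have hy₂' : y₂ = kernel₂ N := funext fun s => by simp [hy₂, kernel₂, expMode]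
  have hsample (p : ℕ) : 2 * π * p / (N + 1) = samplePoint (N + 1) p := by simp [samplePoint]
  simp only [hsample]
  rw [sum_samples_eq_sum_sampledConv (N + 1) _ a _ hf hHf, hf, mul_sum, hy₁', hy₂']
  refine sum_congr rfl fun n hn => ?_
  rw [sampledConv_kernel hn, Pi.smul_apply, smul_eq_mul, Nat.cast_succ, expMode]
  field_simp
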